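/- arXiv:1908.06199 — 2 statements merged into one kernel-verified Lean document; each statement's English description precedes it below -/
import Mathlib

section
/- Let C_n = C_n^{(3/2)} denote the Gegenbauer polynomial with parameter 3/2, P_n the Legendre polynomial, and for real parameters α_L, α_R set H(n) = 1 + n²(α_L + α_R + (n−1)(n+1)α_Lα_R). Then the polynomial M_n(α_L,α_R,x) = (H(n) + n·(α_L+α_R+2n(n+1)α_Lα_R))·P_n(x) + (α_L(1+α_Rn(n+1))(1−x) − α_R(1+α_Ln(n+1))(1+x))·P_n'(x) satisfies the identity M_n(α_L,α_R,x) = (C_n(x)·H(n) − C_{n−2}(x)·H(n+1)) / (2n+1) + C_{n−1}(x)·(α_L − α_R) for n ≥ 2. -/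
open Polynomial

/-!
Write `w = (X² - 1)^m`. Rodrigues' formula gives `P_m = c_m w⁽ᵐ⁾` and, since
`((X² - 1)^(m+1))' = 2(m+1) X w`, also `P_{m+1} = c_m (X w)⁽ᵐ⁾`. The Leibniz rule for a product
with `X` then yields the two three-term relations `P'_{m+1} = X P'_m + (m+1) P_m` and
`X P'_{m+1} = (m+1) P_{m+1} + P'_m`. For `n ≥ 2` they express `C_n = P'_{n+1}` and
`C_{n-2} = P'_{n-1}` through `P_n` and `P'_n`, and the identity reduces to
`H(n+1) - H(n) = (2n+1)(α_L + α_R + 2n(n+1) α_L α_R)`.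
-/

/-- The Legendre polynomial of degree `n` (Rodrigues' formula). -/
noncomputable def legendre (n : ℕ) : Polynomial ℝ :=
  C ((1 : ℝ) / (2 ^ n * n.factorial)) * derivative^[n] ((X ^ 2 - 1) ^ n)

/-- The Gegenbauer polynomial `C_n^{(3/2)}(x) = P_{n+1}'(x)`. -/
noncomputable def gegenbauer32 (n : ℕ) : Polynomial ℝ := derivative (legendre (n + 1))

/-- `H(n) = 1 + n²(α_L + α_R + (n−1)(n+1)α_Lα_R)`. -/
noncomputable def Hc0 (αL αR : ℝ) (n : ℕ) : ℝ :=
  1 + (n : ℝ) ^ 2 * (αL + αR + ((n : ℝ) - 1) * ((n : ℝ) + 1) * αL * αR)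

/-- `M_n(α_L,α_R,x)` (formula (5) of Section 2). -/
noncomputable def Mc0 (αL αR : ℝ) (n : ℕ) : Polynomial ℝ :=
  C (Hc0 αL αR n + (n : ℝ) * (αL + αR + 2 * (n : ℝ) * ((n : ℝ) + 1) * αL * αR)) * legendre n +
    (C (αL * (1 + αR * (n : ℝ) * ((n : ℝ) + 1))) * (1 - X) -
      C (αR * (1 + αL * (n : ℝ) * ((n : ℝ) + 1))) * (1 + X)) * derivative (legendre n)

section Rodrigues

variable {R : Type*} [CommRing R]

lemma derivative_X_sq_sub_one_pow_succ (m : ℕ) :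
    derivative ((X ^ 2 - 1 : R[X]) ^ (m + 1)) = (2 * (m + 1)) • ((X ^ 2 - 1) ^ m * X) := by
  rw [derivative_pow, derivative_sub, derivative_X_sq, derivative_one, sub_zero, nsmul_eq_mul,
    C_eq_natCast, map_ofNat C 2]
  push_cast
  ring

lemma iterate_derivative_X_sq_sub_one_pow_mul_X (m : ℕ) :
    derivative^[m + 1] ((X ^ 2 - 1 : R[X]) ^ m * X) * X - derivative^[m + 1] ((X ^ 2 - 1) ^ m) =
      (m + 1 : R[X]) * derivative^[m] ((X ^ 2 - 1) ^ m * X) := by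
  -- differentiate `(X² - 1)^(m+1) = ((X² - 1)^m X) X - (X² - 1)^m` `m + 1` times in two ways
  have hsplit : derivative^[m + 1] ((X ^ 2 - 1 : R[X]) ^ (m + 1)) =
      derivative^[m + 1] ((X ^ 2 - 1) ^ m * X * X) - derivative^[m + 1] ((X ^ 2 - 1) ^ m) := by
    rw [← iterate_derivative_sub]
    congr 1
    ring
  rw [Function.iterate_succ_apply, derivative_X_sq_sub_one_pow_succ, iterate_derivative_smul,
    iterate_derivative_mul_X (n := m + 1) ((X ^ 2 - 1) ^ m * X), Nat.add_sub_cancel,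
    nsmul_eq_mul, nsmul_eq_mul] at hsplit
  push_cast at hsplit
  linear_combination -hsplit

end Rodrigues

lemma one_div_two_pow_mul_factorial_succ {K : Type*} [Field K] [CharZero K] (m : ℕ) :
    (1 : K) / (2 ^ (m + 1) * (m + 1).factorial) * ((2 * (m + 1) : ℕ) : K) =
      1 / (2 ^ m * m.factorial) := by
  rw [Nat.factorial_succ]
  push_cast
  field_simp
  ring

lemma legendre_succ_eq_iterate_derivative (m : ℕ) :
    legendre (m + 1) =
      C ((1 : ℝ) / (2 ^ m * m.factorial)) * derivative^[m] ((X ^ 2 - 1) ^ m * X) := by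
  rw [legendre, Function.iterate_succ_apply, derivative_X_sq_sub_one_pow_succ,
    iterate_derivative_smul, nsmul_eq_mul, ← mul_assoc, ← C_eq_natCast, ← C_mul,
    one_div_two_pow_mul_factorial_succ]

lemma derivative_legendre_eq_iterate_derivative (m : ℕ) :
    derivative (legendre m) =
      C ((1 : ℝ) / (2 ^ m * m.factorial)) * derivative^[m + 1] ((X ^ 2 - 1) ^ m) := by
  rw [legendre, derivative_C_mul, Function.iterate_succ_apply']

theorem derivative_legendre_succ (m : ℕ) :
    derivative (legendre (m + 1)) =
      derivative (legendre m) * X + (m + 1 : ℝ[X]) * legendre m := by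
  rw [legendre_succ_eq_iterate_derivative, derivative_C_mul,
    ← Function.iterate_succ_apply' derivative, iterate_derivative_mul_X,
    derivative_legendre_eq_iterate_derivative, legendre]
  simp only [nsmul_eq_mul]
  push_cast
  ring

theorem derivative_legendre_succ_mul_X (m : ℕ) :
    derivative (legendre (m + 1)) * X =
      (m + 1 : ℝ[X]) * legendre (m + 1) + derivative (legendre m) := by
  rw [legendre_succ_eq_iterate_derivative, derivative_C_mul,
    ← Function.iterate_succ_apply' derivative, derivative_legendre_eq_iterate_derivative]
  linear_combination
    C ((1 : ℝ) / (2 ^ m * m.factorial)) * iterate_derivative_X_sq_sub_one_pow_mul_X (R := ℝ) m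

lemma Hc0_succ_sub (αL αR : ℝ) (n : ℕ) :
    Hc0 αL αR (n + 1) - Hc0 αL αR n =
      (2 * n + 1) * (αL + αR + 2 * n * (n + 1) * αL * αR) := by
  simp only [Hc0]
  push_cast
  ring

/-- Formula (A.2.1): `M_n(α_L,α_R,x) = (C_n(x)·H(n) − C_{n−2}(x)·H(n+1)) / (2n+1)
 + C_{n−1}(x)·(α_L − α_R)` for `n ≥ 2`, where `C_m = C_m^{(3/2)}`. -/
theorem stmt_5 (n : ℕ) (hn : 2 ≤ n) (αL αR : ℝ) :
    Mc0 αL αR n =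
      C ((1 : ℝ) / (2 * (n : ℝ) + 1)) *
        (gegenbauer32 n * C (Hc0 αL αR n) - gegenbauer32 (n - 2) * C (Hc0 αL αR (n + 1))) +
      gegenbauer32 (n - 1) * C (αL - αR) := by
  obtain ⟨m, rfl⟩ : ∃ m, n = m + 2 := ⟨n - 2, by omega⟩
  have hup := derivative_legendre_succ (m + 2)
  have hdown := derivative_legendre_succ_mul_X (m + 1)
  have hH := Hc0_succ_sub αL αR (m + 2)
  rw [Mc0, gegenbauer32, gegenbauer32, gegenbauer32, Nat.add_sub_cancel, hup,
    show m + 2 - 1 = m + 1 from rfl, eq_sub_of_add_eq' hdown.symm, eq_add_of_sub_eq hH]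
  refine Polynomial.funext fun x => ?_
  simp only [eval_add, eval_sub, eval_mul, eval_C, eval_X, eval_one, eval_natCast]
  push_cast
  field_simp
  ring
end

section
/- Let δ = √((n+2)/n) and let C_m = C_m^{(3/2)} be the Gegenbauer polynomials with parameter 3/2. Then R_n(x) = C_n(x) + δ·C_{n−1}(x) has n simple real roots, all contained in the open interval (−1,1). -/
open Polynomial

/-- Formula (12): the node polynomial `R_n = C_n + δ·C_{n−1}` with `δ = √((n+2)/n)`. -/
noncomputable def Rpoly (n : ℕ) : Polynomial ℝ :=
  gegenbauer32 n + C (Real.sqrt (((n : ℝ) + 2) / (n : ℝ))) * gegenbauer32 (n - 1)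

/-
Write `n = N + 1`. The roots `a₀ < ⋯ < a_N` of the Legendre polynomial `P_{N+1}` lie in `(-1, 1)`
(Rolle applied repeatedly to `(x² - 1)^{N+1}`), and by Rolle again `C_N = P_{N+1}'` has a root `bᵢ`
in each gap `(aᵢ, aᵢ₊₁)`. Since `C_{N+1} = x C_N + (N + 2) P_{N+1}`, the polynomial
`R = C_{N+1} + δ C_N` equals `(N + 2) P_{N+1}` at every `bᵢ`, so its signs alternate along
`b₀ < ⋯ < b_{N-1}`. At the endpoints, `R(±1) = (±1)^{N+1} (N + 2) (N + 3 ± δ (N + 1)) / 2`, which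
continues the alternation as long as `|δ| (N + 1) < N + 3`; for `δ = √((N + 3) / (N + 1))` this is
`δ < δ²`. The intermediate value theorem gives `N + 1` roots in `(-1, 1)`; as `deg R = N + 1` these
are all the roots, and they are simple.
-/

open Set

section Interlacing

variable {α : Type*} {k : ℕ}

theorem Fin.strictMono_snoc [Preorder α] {hi : α} {a : Fin k → α} (ha : StrictMono a)
    (hahi : ∀ i, a i < hi) :
    StrictMono (Fin.snoc a hi : Fin (k + 1) → α) := by
  intro i j hij
  induction j using Fin.lastCases with
  | last =>
    induction i using Fin.lastCases with
    | last => exact absurd hij (lt_irrefl _)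
    | cast i => simpa using hahi i
  | cast j =>
    induction i using Fin.lastCases with
    | last => exact absurd hij (not_lt.2 (Fin.le_last _))
    | cast i => simpa using ha (Fin.castSucc_lt_castSucc_iff.1 hij)

theorem Fin.strictMono_cons_snoc [Preorder α] {lo hi : α} {a : Fin k → α} (ha : StrictMono a)
    (haI : ∀ i, a i ∈ Ioo lo hi) (hlt : lo < hi) :
    StrictMono (Fin.cons lo (Fin.snoc a hi) : Fin (k + 2) → α) := by
  refine Fin.strictMono_cons.2 ⟨fun j => ?_, Fin.strictMono_snoc ha fun i => (haI i).2⟩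
  induction j using Fin.lastCases with
  | last => simpa using hlt
  | cast i => simpa using (haI i).1

theorem Fin.forall_cons_snoc {P : α → Prop} {lo hi : α} {a : Fin k → α} (hlo : P lo)
    (ha : ∀ i, P (a i)) (hhi : P hi) (j : Fin (k + 2)) :
    P ((Fin.cons lo (Fin.snoc a hi) : Fin (k + 2) → α) j) := by
  induction j using Fin.cases with
  | zero => simpa
  | succ j =>
    induction j using Fin.lastCases with
    | last => simpa
    | cast i => simpa using ha i

theorem strictMono_of_mem_Ioo_castSucc_succ [Preorder α] {c : Fin (k + 1) → α} {b : Fin k → α}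
    (hb : ∀ i, b i ∈ Ioo (c i.castSucc) (c i.succ)) : StrictMono b := by
  cases k with
  | zero => exact fun i => i.elim0
  | succ k =>
    refine Fin.strictMono_iff_lt_succ.2 fun i => (hb i.castSucc).2.trans ?_
    simpa only [Fin.succ_castSucc] using (hb i.succ).1

theorem exists_strictMono_of_forall_exists_mem_Ioo [Preorder α] {c : Fin (k + 1) → α}
    {P : α → Prop} (h : ∀ i : Fin k, ∃ t ∈ Ioo (c i.castSucc) (c i.succ), P t) :
    ∃ b : Fin k → α, StrictMono b ∧ ∀ i, b i ∈ Ioo (c i.castSucc) (c i.succ) ∧ P (b i) := by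
  choose b hb hP using h
  exact ⟨b, strictMono_of_mem_Ioo_castSucc_succ hb, fun i => ⟨hb i, hP i⟩⟩

theorem mem_Ioo_of_mem_Ioo_castSucc_succ [Preorder α] {c : Fin (k + 1) → α} (hc : Monotone c)
    {i : Fin k} {t : α} (ht : t ∈ Ioo (c i.castSucc) (c i.succ)) : t ∈ Ioo (c 0) (c (Fin.last k)) :=
  ⟨(hc (Fin.zero_le _)).trans_lt ht.1, ht.2.trans_le (hc (Fin.le_last _))⟩

end Interlacing

open Finset in
theorem neg_one_pow_sub_mul_prod_sub_pos {n : ℕ} {a : Fin (n + 1) → ℝ} (ha : StrictMono a)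
    {i : Fin n} {t : ℝ} (ht : t ∈ Ioo (a i.castSucc) (a i.succ)) :
    0 < (-1) ^ (n - i : ℕ) * ∏ j, (t - a j) := by
  classical
  set left := univ.filter (· ≤ i.castSucc)
  set right := univ.filter fun j => ¬ j ≤ i.castSucc
  have hcard : #right = n - i := by
    have : right = Finset.Ioi i.castSucc := by ext j; simp [right]
    simp [this]
  have hleft_pos : 0 < ∏ j ∈ left, (t - a j) :=
    prod_pos fun j hj => sub_pos.2 <| (ha.monotone (mem_filter.1 hj).2).trans_lt ht.1
  have hright_pos : 0 < ∏ j ∈ right, (a j - t) := prod_pos fun j hj => sub_pos.2 <|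
    ht.2.trans_le <| ha.monotone <| Fin.castSucc_lt_iff_succ_le.1 <| not_le.1 (mem_filter.1 hj).2
  have hright : ∏ j ∈ right, (t - a j) = (-1) ^ (n - i : ℕ) * ∏ j ∈ right, (a j - t) := by
    rw [← hcard, ← prod_neg]
    simp
  have hsq : (-1 : ℝ) ^ (n - i : ℕ) * (-1) ^ (n - i : ℕ) = 1 :=
    pow_mul_pow_eq_one _ (by norm_num)
  rw [← prod_filter_mul_prod_filter_not univ (· ≤ i.castSucc), hright]
  calc 0 < (∏ j ∈ left, (t - a j)) * ∏ j ∈ right, (a j - t) := mul_pos hleft_pos hright_pos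
    _ = _ := by linear_combination -(∏ j ∈ left, (t - a j)) * (∏ j ∈ right, (a j - t)) * hsq

namespace Polynomial

theorem exists_isRoot_derivative_mem_Ioo {p : ℝ[X]} {a b : ℝ} (hab : a < b) (ha : p.IsRoot a)
    (hb : p.IsRoot b) : ∃ t ∈ Ioo a b, (derivative p).IsRoot t := by
  obtain ⟨t, ht, h⟩ := exists_deriv_eq_zero hab p.continuousOn (ha.trans hb.symm)
  exact ⟨t, ht, by rwa [Polynomial.deriv] at h⟩

theorem exists_isRoot_mem_Ioo_of_alternating {k : ℕ} {p : ℝ[X]} {c : Fin (k + 1) → ℝ}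
    (hc : StrictMono c) (hsign : ∀ j : Fin (k + 1), 0 < (-1) ^ (k - j : ℕ) * p.eval (c j))
    (i : Fin k) : ∃ t ∈ Ioo (c i.castSucc) (c i.succ), p.IsRoot t := by
  set e := k - (i + 1 : ℕ)
  set q : ℝ[X] := C ((-1) ^ e) * p
  have hleft : q.eval (c i.castSucc) < 0 := by
    have h := hsign i.castSucc
    rw [Fin.val_castSucc, show k - (i : ℕ) = e + 1 by omega, pow_succ] at h
    simp only [q, eval_mul, eval_C]
    linarith
  have hright : 0 < q.eval (c i.succ) := by simpa [q] using hsign i.succ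
  obtain ⟨t, ht, hroot⟩ :=
    intermediate_value_Ioo (hc Fin.castSucc_lt_succ).le q.continuousOn ⟨hleft, hright⟩
  exact ⟨t, ht, by simpa [q, IsRoot] using hroot⟩

section RootsOfInjective

variable {R : Type*} [CommRing R] [IsDomain R] {p : R[X]} {n : ℕ} {x : Fin n → R}

theorem roots_eq_of_injective (hp : p ≠ 0) (hdeg : p.natDegree ≤ n) (hx : Function.Injective x)
    (hroot : ∀ i, p.IsRoot (x i)) : p.roots = (Finset.univ.map ⟨x, hx⟩).val :=
  roots_eq_of_natDegree_le_card_of_ne_zero (by simpa using hroot) (by simpa using hdeg) hp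

theorem exists_eq_of_isRoot_of_injective (hp : p ≠ 0) (hdeg : p.natDegree ≤ n)
    (hx : Function.Injective x) (hroot : ∀ i, p.IsRoot (x i)) {y : R} (hy : p.IsRoot y) :
    ∃ i, y = x i := by
  have hmem : y ∈ p.roots := (mem_roots hp).2 hy
  rw [roots_eq_of_injective hp hdeg hx hroot] at hmem
  simpa [eq_comm] using hmem

theorem not_isRoot_derivative_of_injective (hp : p ≠ 0) (hdeg : p.natDegree ≤ n)
    (hx : Function.Injective x) (hroot : ∀ i, p.IsRoot (x i)) (i : Fin n) :
    ¬ (derivative p).IsRoot (x i) := by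
  classical
  intro hder
  have hmult : 1 < p.roots.count (x i) := by
    rw [count_roots]
    exact (one_lt_rootMultiplicity_iff_isRoot hp).2 ⟨hroot i, hder⟩
  rw [roots_eq_of_injective hp hdeg hx hroot, Multiset.count_eq_one_of_mem (Finset.nodup _)
    (by simp)] at hmult
  exact lt_irrefl _ hmult

theorem eval_eq_leadingCoeff_mul_prod_of_injective (hp : p ≠ 0) (hdeg : p.natDegree = n)
    (hx : Function.Injective x) (hroot : ∀ i, p.IsRoot (x i)) (t : R) :
    p.eval t = p.leadingCoeff * ∏ i, (t - x i) := by
  have hroots := roots_eq_of_injective hp hdeg.le hx hroot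
  have hcard : Multiset.card p.roots = p.natDegree := by simp [hroots, hdeg]
  conv_lhs => rw [← C_leadingCoeff_mul_prod_multiset_X_sub_C hcard, hroots]
  rw [eval_mul, eval_C, Finset.prod_map_val, Finset.prod_map, eval_prod]
  simp

end RootsOfInjective

theorem neg_one_pow_sub_mul_eval_pos {p : ℝ[X]} {n : ℕ} {a : Fin (n + 1) → ℝ}
    (hdeg : p.natDegree = n + 1) (hlc : 0 < p.leadingCoeff) (ha : StrictMono a)
    (hroot : ∀ j, p.IsRoot (a j)) {i : Fin n} {t : ℝ} (ht : t ∈ Ioo (a i.castSucc) (a i.succ)) :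
    0 < (-1) ^ (n - i : ℕ) * p.eval t := by
  rw [eval_eq_leadingCoeff_mul_prod_of_injective (leadingCoeff_ne_zero.1 hlc.ne') hdeg
    ha.injective hroot, mul_left_comm]
  exact mul_pos hlc (neg_one_pow_sub_mul_prod_sub_pos ha ht)

theorem natDegree_iterate_derivative_eq {R : Type*} [Semiring R] [IsAddTorsionFree R]
    (p : R[X]) (k : ℕ) : (derivative^[k] p).natDegree = p.natDegree - k := by
  induction k with
  | zero => rfl
  | succ k ih => rw [Function.iterate_succ_apply', natDegree_derivative, ih, Nat.sub_sub]

theorem leadingCoeff_iterate_derivative_pos {R : Type*} [Ring R] [LinearOrder R]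
    [IsStrictOrderedRing R] {p : R[X]} (hp : 0 < p.leadingCoeff) {k : ℕ} (hk : k ≤ p.natDegree) :
    0 < (derivative^[k] p).leadingCoeff := by
  induction k with
  | zero => exact hp
  | succ k ih =>
    rw [Function.iterate_succ_apply', leadingCoeff_derivative, natDegree_iterate_derivative_eq]
    exact mul_pos (ih (by omega)) (by exact_mod_cast (by omega : 0 < p.natDegree - k))

theorem isRoot_iterate_derivative_pow {R : Type*} [CommRing R] {p : R[X]} {t : R}
    (ht : p.IsRoot t) {k m : ℕ} (hk : k < m) : (derivative^[k] (p ^ m)).IsRoot t :=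
  dvd_iff_isRoot.1 <| (dvd_pow_self _ (Nat.sub_ne_zero_of_lt hk)).trans <|
    pow_sub_dvd_iterate_derivative_of_pow_dvd _ <| pow_dvd_pow_of_dvd (dvd_iff_isRoot.2 ht) m

theorem eval_iterate_derivative_X_sub_C_pow_mul {R : Type*} [CommRing R] (a : R) (m : ℕ)
    (q : R[X]) : (derivative^[m] ((X - C a) ^ m * q)).eval a = m.factorial * q.eval a := by
  rw [iterate_derivative_mul, eval_finsetSum, Finset.sum_eq_single 0]
  · simp [iterate_derivative_X_sub_pow_self]
  · intro k hk hk0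
    rw [iterate_derivative_X_sub_pow, Nat.sub_sub_self (by simpa [Nat.lt_succ_iff] using hk)]
    simp [zero_pow hk0]
  · simp

end Polynomial

theorem monic_sq_sub_one_pow (m : ℕ) : ((X ^ 2 - 1 : ℝ[X]) ^ m).Monic := by
  simpa using (monic_X_pow_sub_C (1 : ℝ) two_ne_zero).pow m

theorem natDegree_sq_sub_one_pow (m : ℕ) : ((X ^ 2 - 1 : ℝ[X]) ^ m).natDegree = 2 * m := by
  rw [natDegree_pow, ← C_1, natDegree_X_pow_sub_C, mul_comm]

theorem natDegree_legendre (m : ℕ) : (legendre m).natDegree = m := by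
  rw [legendre, natDegree_C_mul (by positivity), natDegree_iterate_derivative_eq,
    natDegree_sq_sub_one_pow]
  omega

theorem leadingCoeff_legendre_pos (m : ℕ) : 0 < (legendre m).leadingCoeff := by
  rw [legendre, leadingCoeff_mul, leadingCoeff_C]
  refine mul_pos (by positivity) (leadingCoeff_iterate_derivative_pos ?_ ?_)
  · simp [(monic_sq_sub_one_pow m).leadingCoeff]
  · rw [natDegree_sq_sub_one_pow]; omega

theorem exists_roots_iterate_derivative_sq_sub_one_pow {m k : ℕ} (hk : k ≤ m) :
    ∃ a : Fin k → ℝ, StrictMono a ∧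
      ∀ i, a i ∈ Ioo (-1) 1 ∧ (derivative^[k] ((X ^ 2 - 1 : ℝ[X]) ^ m)).IsRoot (a i) := by
  induction k with
  | zero => exact ⟨Fin.elim0, fun i => i.elim0, fun i => i.elim0⟩
  | succ k ih =>
    obtain ⟨a, ha, haI⟩ := ih (by omega)
    set c : Fin (k + 2) → ℝ := Fin.cons (-1) (Fin.snoc a 1)
    have hc : StrictMono c := Fin.strictMono_cons_snoc ha (fun i => (haI i).1) (by norm_num)
    -- `±1` are roots of order `m` of `(X² - 1)^m`, so they survive `k < m` differentiations
    have hend : ∀ t : ℝ, t ^ 2 = 1 → (derivative^[k] ((X ^ 2 - 1 : ℝ[X]) ^ m)).IsRoot t :=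
      fun t ht => isRoot_iterate_derivative_pow (by simp [ht]) (by omega)
    have hroot : ∀ j, (derivative^[k] ((X ^ 2 - 1 : ℝ[X]) ^ m)).IsRoot (c j) :=
      Fin.forall_cons_snoc (hend _ (by norm_num)) (fun i => (haI i).2) (hend _ (by norm_num))
    obtain ⟨b, hb, hbI⟩ := exists_strictMono_of_forall_exists_mem_Ioo fun i =>
      exists_isRoot_derivative_mem_Ioo (hc Fin.castSucc_lt_succ) (hroot _) (hroot _)
    refine ⟨b, hb, fun i => ⟨?_, by rw [Function.iterate_succ_apply']; exact (hbI i).2⟩⟩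
    simpa [c] using mem_Ioo_of_mem_Ioo_castSucc_succ hc.monotone (hbI i).1

theorem exists_roots_legendre (m : ℕ) :
    ∃ a : Fin m → ℝ, StrictMono a ∧ ∀ i, a i ∈ Ioo (-1) 1 ∧ (legendre m).IsRoot (a i) := by
  obtain ⟨a, ha, haI⟩ := exists_roots_iterate_derivative_sq_sub_one_pow le_rfl (m := m)
  exact ⟨a, ha, fun i => ⟨(haI i).1, by simp [legendre, (haI i).2.eq_zero]⟩⟩

theorem legendre_eval_one (m : ℕ) : (legendre m).eval 1 = 1 := by
  have : (X ^ 2 - 1 : ℝ[X]) ^ m = (X - C 1) ^ m * (X + 1) ^ m := by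
    rw [← mul_pow, C_1]; ring
  rw [legendre, eval_mul, eval_C, this, eval_iterate_derivative_X_sub_C_pow_mul, eval_pow,
    eval_add, eval_X, eval_one, one_add_one_eq_two]
  field_simp

theorem legendre_eval_neg_one (m : ℕ) : (legendre m).eval (-1) = (-1) ^ m := by
  have : (X ^ 2 - 1 : ℝ[X]) ^ m = (X - C (-1)) ^ m * (X - 1) ^ m := by
    rw [← mul_pow, C_neg, C_1]; ring
  rw [legendre, eval_mul, eval_C, this, eval_iterate_derivative_X_sub_C_pow_mul, eval_pow,
    eval_sub, eval_X, eval_one, show (-1 - 1 : ℝ) = -1 * 2 by norm_num, mul_pow]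
  field_simp

theorem derivative_sq_sub_one_pow_succ (k : ℕ) :
    derivative ((X ^ 2 - 1 : ℝ[X]) ^ (k + 1)) =
      ((2 * (k + 1) : ℕ) : ℝ[X]) * ((X ^ 2 - 1) ^ k * X) := by
  rw [derivative_pow]
  simp only [derivative_sub, derivative_X_pow, derivative_one, map_natCast]
  push_cast
  ring

theorem gegenbauer32_succ (m : ℕ) :
    gegenbauer32 (m + 1) = X * gegenbauer32 m + C ((m : ℝ) + 2) * legendre (m + 1) := by
  set D := fun k => derivative^[k] ((X ^ 2 - 1 : ℝ[X]) ^ (m + 1))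
  have hD : derivative^[m + 3] ((X ^ 2 - 1 : ℝ[X]) ^ (m + 2)) =
      ((2 * (m + 2) : ℕ) : ℝ[X]) * (X * D (m + 2) + ((m + 2 : ℕ) : ℝ[X]) * D (m + 1)) := by
    rw [Function.iterate_succ_apply, derivative_sq_sub_one_pow_succ, iterate_derivative_natCast_mul,
      iterate_derivative_mul_X, nsmul_eq_mul, show m + 2 - 1 = m + 1 by omega]
    ring
  have hc : C ((1 : ℝ) / (2 ^ (m + 2) * (m + 2).factorial)) * ((2 * (m + 2) : ℕ) : ℝ[X]) =
      C ((1 : ℝ) / (2 ^ (m + 1) * (m + 1).factorial)) := by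
    rw [← map_natCast C, ← C_mul, Nat.factorial_succ (m + 1)]
    congr 1
    push_cast
    field_simp
    ring
  have hm : ((m + 2 : ℕ) : ℝ[X]) = C ((m : ℝ) + 2) := by rw [← map_natCast C]; push_cast; rfl
  simp only [gegenbauer32, legendre, derivative_C_mul, ← Function.iterate_succ_apply' derivative]
  rw [hD, hm]
  linear_combination (X * D (m + 2) + C ((m : ℝ) + 2) * D (m + 1)) * hc

theorem gegenbauer32_zero : gegenbauer32 0 = 1 := by
  simp [gegenbauer32, legendre, one_add_one_eq_two, ← C_mul]

theorem gegenbauer32_eval_one (m : ℕ) : (gegenbauer32 m).eval 1 = (m + 1) * (m + 2) / 2 := by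
  induction m with
  | zero => simp [gegenbauer32_zero]
  | succ m ih =>
    rw [gegenbauer32_succ, eval_add, eval_mul, eval_mul, eval_X, eval_C, ih, legendre_eval_one]
    push_cast
    ring

theorem gegenbauer32_eval_neg_one (m : ℕ) :
    (gegenbauer32 m).eval (-1) = (-1) ^ m * ((m + 1) * (m + 2) / 2) := by
  induction m with
  | zero => simp [gegenbauer32_zero]
  | succ m ih =>
    rw [gegenbauer32_succ, eval_add, eval_mul, eval_mul, eval_X, eval_C, ih, legendre_eval_neg_one]
    push_cast
    ring

theorem natDegree_gegenbauer32 (m : ℕ) : (gegenbauer32 m).natDegree = m := by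
  rw [gegenbauer32, natDegree_derivative, natDegree_legendre, Nat.add_sub_cancel]

noncomputable def nodePoly (N : ℕ) (δ : ℝ) : ℝ[X] := gegenbauer32 (N + 1) + C δ * gegenbauer32 N

theorem natDegree_nodePoly (N : ℕ) (δ : ℝ) : (nodePoly N δ).natDegree = N + 1 := by
  rw [nodePoly, natDegree_add_eq_left_of_natDegree_lt, natDegree_gegenbauer32]
  exact (natDegree_C_mul_le _ _).trans_lt (by simp [natDegree_gegenbauer32])

theorem eval_nodePoly_of_isRoot {N : ℕ} (δ : ℝ) {t : ℝ} (ht : (gegenbauer32 N).IsRoot t) :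
    (nodePoly N δ).eval t = (N + 2) * (legendre (N + 1)).eval t := by
  rw [nodePoly, gegenbauer32_succ]
  simp [ht.eq_zero]

theorem eval_one_nodePoly_pos {N : ℕ} {δ : ℝ} (hδ : |δ| * (N + 1) < N + 3) :
    0 < (nodePoly N δ).eval 1 := by
  have hδ' : -(N + 3 : ℝ) < δ * (N + 1) := by nlinarith [neg_abs_le δ]
  simp only [nodePoly, eval_add, eval_mul, eval_C, gegenbauer32_eval_one]
  push_cast
  calc 0 < ((N : ℝ) + 2) / 2 * (N + 3 + δ * (N + 1)) := mul_pos (by positivity) (by linarith)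
    _ = _ := by ring

theorem neg_one_pow_mul_eval_neg_one_nodePoly_pos {N : ℕ} {δ : ℝ} (hδ : |δ| * (N + 1) < N + 3) :
    0 < (-1) ^ (N + 1) * (nodePoly N δ).eval (-1) := by
  have hδ' : δ * (N + 1) < N + 3 := by nlinarith [le_abs_self δ]
  have hsq : ((-1 : ℝ) ^ N) ^ 2 = 1 := by rw [← pow_mul, pow_mul', neg_one_sq, one_pow]
  simp only [nodePoly, eval_add, eval_mul, eval_C, gegenbauer32_eval_neg_one]
  push_cast
  calc 0 < ((N : ℝ) + 2) / 2 * (N + 3 - δ * (N + 1)) := mul_pos (by positivity) (by linarith)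
    _ = _ := by
      rw [pow_succ]
      linear_combination (δ * ((N + 1) * (N + 2) / 2) - (N + 2) * (N + 3) / 2 : ℝ) * hsq

theorem exists_roots_nodePoly (N : ℕ) {δ : ℝ} (hδ : |δ| * (N + 1) < N + 3) :
    ∃ x : Fin (N + 1) → ℝ, StrictMono x ∧ ∀ i, x i ∈ Ioo (-1) 1 ∧ (nodePoly N δ).IsRoot (x i) := by
  obtain ⟨a, ha, haI⟩ := exists_roots_legendre (N + 1)
  obtain ⟨b, hb, hbI⟩ := exists_strictMono_of_forall_exists_mem_Ioo fun i =>
    exists_isRoot_derivative_mem_Ioo (ha Fin.castSucc_lt_succ) (haI _).2 (haI _).2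
  have hb_mem : ∀ i, b i ∈ Ioo (-1) 1 := fun i =>
    have h := mem_Ioo_of_mem_Ioo_castSucc_succ ha.monotone (hbI i).1
    ⟨(haI 0).1.1.trans h.1, h.2.trans (haI _).1.2⟩
  set c : Fin (N + 2) → ℝ := Fin.cons (-1) (Fin.snoc b 1)
  have hc : StrictMono c := Fin.strictMono_cons_snoc hb hb_mem (by norm_num)
  have hsign : ∀ j : Fin (N + 2), 0 < (-1) ^ (N + 1 - (j : ℕ)) * (nodePoly N δ).eval (c j) := by
    intro j
    induction j using Fin.cases with
    | zero => simpa [c] using neg_one_pow_mul_eval_neg_one_nodePoly_pos hδ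
    | succ j =>
      induction j using Fin.lastCases with
      | last => simpa [c] using eval_one_nodePoly_pos hδ
      | cast i =>
        have hP := neg_one_pow_sub_mul_eval_pos (natDegree_legendre _)
          (leadingCoeff_legendre_pos _) ha (fun j => (haI j).2) (hbI i).1
        simp only [c, Fin.cons_succ, Fin.snoc_castSucc, Fin.val_succ, Fin.val_castSucc,
          eval_nodePoly_of_isRoot δ (hbI i).2, show N + 1 - (i + 1) = N - i by omega]
        rw [mul_left_comm]
        exact mul_pos (by positivity) hP
  obtain ⟨x, hx, hxI⟩ := exists_strictMono_of_forall_exists_mem_Ioo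
    (exists_isRoot_mem_Ioo_of_alternating hc hsign)
  refine ⟨x, hx, fun i => ⟨?_, (hxI i).2⟩⟩
  simpa [c] using mem_Ioo_of_mem_Ioo_castSucc_succ hc.monotone (hxI i).1

theorem exists_simple_roots_nodePoly (N : ℕ) {δ : ℝ} (hδ : |δ| * (N + 1) < N + 3) :
    ∃ x : Fin (N + 1) → ℝ, StrictMono x ∧
      (∀ i, x i ∈ Ioo (-1 : ℝ) 1 ∧ (nodePoly N δ).eval (x i) = 0 ∧
        (derivative (nodePoly N δ)).eval (x i) ≠ 0) ∧
      (∀ y : ℝ, (nodePoly N δ).eval y = 0 → ∃ i, y = x i) := by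
  obtain ⟨x, hx, hxI⟩ := exists_roots_nodePoly N hδ
  have hdeg := natDegree_nodePoly N δ
  have hne : nodePoly N δ ≠ 0 := ne_zero_of_natDegree_gt (n := N) (by omega)
  have hroot i := (hxI i).2
  exact ⟨x, hx, fun i => ⟨(hxI i).1, hroot i,
    not_isRoot_derivative_of_injective hne hdeg.le hx.injective hroot i⟩,
    fun y => exists_eq_of_isRoot_of_injective hne hdeg.le hx.injective hroot⟩

theorem sqrt_add_two_div_mul_lt {x : ℝ} (hx : 0 < x) : √((x + 2) / x) * x < x + 2 := by
  have hgt : 1 < (x + 2) / x := by rw [one_lt_div hx]; linarith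
  calc √((x + 2) / x) * x < (x + 2) / x * x :=
        mul_lt_mul_of_pos_right (Real.sqrt_lt_self_iff.2 hgt) hx
    _ = x + 2 := div_mul_cancel₀ _ hx.ne'

/-- `R_n(x) = C_n(x) + δ·C_{n−1}(x)` has `n` simple real roots, all contained in `(−1,1)`. -/
theorem stmt_8 (n : ℕ) (hn : 1 ≤ n) :
    ∃ x : Fin n → ℝ, StrictMono x ∧
      (∀ i, x i ∈ Set.Ioo (-1 : ℝ) 1 ∧ (Rpoly n).eval (x i) = 0 ∧
        (derivative (Rpoly n)).eval (x i) ≠ 0) ∧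
      (∀ y : ℝ, (Rpoly n).eval y = 0 → ∃ i, y = x i) := by
  obtain ⟨N, rfl⟩ : ∃ N, n = N + 1 := ⟨n - 1, by omega⟩
  -- `Rpoly (N + 1)` unfolds to `nodePoly N √((N + 1 + 2) / (N + 1))`
  refine exists_simple_roots_nodePoly N ?_
  rw [abs_of_nonneg (Real.sqrt_nonneg _)]
  have := sqrt_add_two_div_mul_lt (x := ((N + 1 : ℕ) : ℝ)) (by positivity)
  push_cast at this ⊢
  linarith
end
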